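/- Let ψ be smooth on (0,∞), strictly convex with ψ(0) = 0 and 0 < ψ'(0+) < ∞, and let Φ be its inverse. For each k ≥ 1, lim_{q↓0} |Φ^{(k)}(q)| < ∞ if and only if lim_{q↓0} |ψ^{(k)}(q)| < ∞. -/

import Mathlib

open Set Filter Topology ContDiff

/-- `Nice n f` : `f` is smooth on some interval `(0, δ)` and all its iterated derivatives
up to order `n` have finite limits at `0+`. -/
def Nice (n : ℕ) (f : ℝ → ℝ) : Prop :=
  (∃ δ > (0:ℝ), ContDiffOn ℝ ∞ f (Ioo 0 δ)) ∧
    ∀ j ≤ n, ∃ L : ℝ, Tendsto (iteratedDeriv j f) (𝓝[>] (0:ℝ)) (𝓝 L)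

lemma Ioo_mem_pos {δ : ℝ} (hδ : 0 < δ) : Ioo (0:ℝ) δ ∈ 𝓝[>] (0:ℝ) :=
  Ioo_mem_nhdsGT_of_mem ⟨le_refl _, hδ⟩

lemma contDiffOn_iteratedDeriv {f : ℝ → ℝ} {s : Set ℝ} (hs : IsOpen s)
    (hf : ContDiffOn ℝ ∞ f s) : ∀ j : ℕ, ContDiffOn ℝ ∞ (iteratedDeriv j f) s := by
  intro j
  induction j generalizing f with
  | zero => simpa [iteratedDeriv_zero] using hf
  | succ n ih =>
    rw [iteratedDeriv_succ']
    exact ih (hf.deriv_of_isOpen hs (le_of_eq (by rfl)))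

lemma differentiableAt_iteratedDeriv {f : ℝ → ℝ} {s : Set ℝ} (hs : IsOpen s)
    (hf : ContDiffOn ℝ ∞ f s) (j : ℕ) {x : ℝ} (hx : x ∈ s) :
    DifferentiableAt ℝ (iteratedDeriv j f) x :=
  ((contDiffOn_iteratedDeriv hs hf j).differentiableOn (by simp)).differentiableAt
    (hs.mem_nhds hx)

lemma hasDerivAt_iteratedDeriv {f : ℝ → ℝ} {s : Set ℝ} (hs : IsOpen s)
    (hf : ContDiffOn ℝ ∞ f s) (j : ℕ) {x : ℝ} (hx : x ∈ s) :
    HasDerivAt (iteratedDeriv j f) (iteratedDeriv (j+1) f x) x := by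
  rw [iteratedDeriv_succ]
  exact (differentiableAt_iteratedDeriv hs hf j hx).hasDerivAt

lemma iteratedDeriv_congr_of_open {f g : ℝ → ℝ} {s : Set ℝ} (hs : IsOpen s)
    (h : ∀ x ∈ s, f x = g x) : ∀ j, ∀ x ∈ s, iteratedDeriv j f x = iteratedDeriv j g x := by
  intro j
  induction j with
  | zero => simpa [iteratedDeriv_zero] using h
  | succ n ih =>
    intro x hx
    rw [iteratedDeriv_succ, iteratedDeriv_succ]
    exact Filter.EventuallyEq.deriv_eq <|
      Filter.eventuallyEq_of_mem (hs.mem_nhds hx) (fun y hy => ih y hy)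

lemma Nice.congr {n : ℕ} {f g : ℝ → ℝ} (hf : Nice n f) {δ : ℝ} (hδ : 0 < δ)
    (h : ∀ x ∈ Ioo (0:ℝ) δ, f x = g x) : Nice n g := by
  obtain ⟨⟨δ', hδ', hsm⟩, hlim⟩ := hf
  refine ⟨⟨min δ δ', lt_min hδ hδ', ?_⟩, ?_⟩
  · exact (hsm.mono (Ioo_subset_Ioo le_rfl (min_le_right _ _))).congr
      fun x hx => (h x ⟨hx.1, lt_of_lt_of_le hx.2 (min_le_left _ _)⟩).symm
  · intro j hj
    obtain ⟨L, hL⟩ := hlim j hj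
    refine ⟨L, hL.congr' ?_⟩
    exact Filter.eventuallyEq_of_mem (Ioo_mem_pos hδ)
      (fun x hx => iteratedDeriv_congr_of_open isOpen_Ioo h j x hx)

lemma Nice.mono {m n : ℕ} {f : ℝ → ℝ} (h : Nice n f) (hmn : m ≤ n) : Nice m f :=
  ⟨h.1, fun j hj => h.2 j (hj.trans hmn)⟩

lemma Nice.derivStep {n : ℕ} {f : ℝ → ℝ} (h : Nice (n+1) f) : Nice n (deriv f) := by
  obtain ⟨⟨δ, hδ, hsm⟩, hlim⟩ := h
  refine ⟨⟨δ, hδ, hsm.deriv_of_isOpen isOpen_Ioo (le_of_eq (by rfl))⟩, fun j hj => ?_⟩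
  rw [← iteratedDeriv_succ']
  exact hlim (j+1) (Nat.succ_le_succ hj)

lemma Nice.of_deriv {n : ℕ} {f : ℝ → ℝ} (hsm : ∃ δ > (0:ℝ), ContDiffOn ℝ ∞ f (Ioo 0 δ))
    (h0 : ∃ L : ℝ, Tendsto f (𝓝[>] (0:ℝ)) (𝓝 L)) (hd : Nice n (deriv f)) :
    Nice (n+1) f := by
  refine ⟨hsm, fun j hj => ?_⟩
  match j with
  | 0 => simpa [iteratedDeriv_zero] using h0
  | (i+1) =>
    rw [iteratedDeriv_succ']
    exact hd.2 i (Nat.succ_le_succ_iff.1 hj)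

lemma diffAt_of_contDiffOn {f : ℝ → ℝ} {s : Set ℝ} (hs : IsOpen s)
    (hf : ContDiffOn ℝ ∞ f s) {x : ℝ} (hx : x ∈ s) : DifferentiableAt ℝ f x :=
  ((hf.differentiableOn (by simp)).differentiableAt (hs.mem_nhds hx))

lemma exists_Ioo_of_eventually {p : ℝ → Prop} (h : ∀ᶠ x in 𝓝[>] (0:ℝ), p x) :
    ∃ ε > (0:ℝ), ∀ x ∈ Ioo (0:ℝ) ε, p x := by
  rcases mem_nhdsGT_iff_exists_Ioo_subset.1 h with ⟨u, hu, hsub⟩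
  exact ⟨u, hu, fun x hx => hsub hx⟩

lemma Nice.add {n : ℕ} {f g : ℝ → ℝ} (hf : Nice n f) (hg : Nice n g) :
    Nice n (fun x => f x + g x) := by
  induction n generalizing f g with
  | zero =>
    obtain ⟨⟨δf, hδf, hsf⟩, hlf⟩ := hf
    obtain ⟨⟨δg, hδg, hsg⟩, hlg⟩ := hg
    refine ⟨⟨min δf δg, lt_min hδf hδg, ?_⟩, fun j hj => ?_⟩
    · exact (hsf.mono (Ioo_subset_Ioo le_rfl (min_le_left _ _))).add
        (hsg.mono (Ioo_subset_Ioo le_rfl (min_le_right _ _)))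
    · interval_cases j
      obtain ⟨Lf, hLf⟩ := hlf 0 le_rfl
      obtain ⟨Lg, hLg⟩ := hlg 0 le_rfl
      simp only [iteratedDeriv_zero] at *
      exact ⟨Lf + Lg, hLf.add hLg⟩
  | succ n ih =>
    obtain ⟨δf, hδf, hsf⟩ := hf.1
    obtain ⟨δg, hδg, hsg⟩ := hg.1
    set δ := min δf δg with hδdef
    have hδ : 0 < δ := lt_min hδf hδg
    have hsf' := hsf.mono (Ioo_subset_Ioo (le_refl (0:ℝ)) (min_le_left δf δg))
    have hsg' := hsg.mono (Ioo_subset_Ioo (le_refl (0:ℝ)) (min_le_right δf δg))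
    refine Nice.of_deriv ⟨δ, hδ, hsf'.add hsg'⟩ ?_ ?_
    · obtain ⟨Lf, hLf⟩ := hf.2 0 (Nat.zero_le _)
      obtain ⟨Lg, hLg⟩ := hg.2 0 (Nat.zero_le _)
      simp only [iteratedDeriv_zero] at hLf hLg
      exact ⟨Lf + Lg, hLf.add hLg⟩
    · refine (ih hf.derivStep hg.derivStep).congr hδ (fun x hx => ?_)
      exact (deriv_add (diffAt_of_contDiffOn isOpen_Ioo hsf' hx)
        (diffAt_of_contDiffOn isOpen_Ioo hsg' hx)).symm

lemma Nice.mul {n : ℕ} {f g : ℝ → ℝ} (hf : Nice n f) (hg : Nice n g) :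
    Nice n (fun x => f x * g x) := by
  induction n generalizing f g with
  | zero =>
    obtain ⟨⟨δf, hδf, hsf⟩, hlf⟩ := hf
    obtain ⟨⟨δg, hδg, hsg⟩, hlg⟩ := hg
    refine ⟨⟨min δf δg, lt_min hδf hδg, ?_⟩, fun j hj => ?_⟩
    · exact (hsf.mono (Ioo_subset_Ioo le_rfl (min_le_left _ _))).mul
        (hsg.mono (Ioo_subset_Ioo le_rfl (min_le_right _ _)))
    · interval_cases j
      obtain ⟨Lf, hLf⟩ := hlf 0 le_rfl
      obtain ⟨Lg, hLg⟩ := hlg 0 le_rfl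
      simp only [iteratedDeriv_zero] at *
      exact ⟨Lf * Lg, hLf.mul hLg⟩
  | succ n ih =>
    obtain ⟨δf, hδf, hsf⟩ := hf.1
    obtain ⟨δg, hδg, hsg⟩ := hg.1
    set δ := min δf δg with hδdef
    have hδ : 0 < δ := lt_min hδf hδg
    have hsf' := hsf.mono (Ioo_subset_Ioo (le_refl (0:ℝ)) (min_le_left δf δg))
    have hsg' := hsg.mono (Ioo_subset_Ioo (le_refl (0:ℝ)) (min_le_right δf δg))
    refine Nice.of_deriv ⟨δ, hδ, hsf'.mul hsg'⟩ ?_ ?_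
    · obtain ⟨Lf, hLf⟩ := hf.2 0 (Nat.zero_le _)
      obtain ⟨Lg, hLg⟩ := hg.2 0 (Nat.zero_le _)
      simp only [iteratedDeriv_zero] at hLf hLg
      exact ⟨Lf * Lg, hLf.mul hLg⟩
    · have h1 : Nice n (fun x => deriv f x * g x) := ih hf.derivStep (hg.mono n.le_succ)
      have h2 : Nice n (fun x => f x * deriv g x) := ih (hf.mono n.le_succ) hg.derivStep
      refine (h1.add h2).congr hδ (fun x hx => ?_)
      exact (deriv_mul (diffAt_of_contDiffOn isOpen_Ioo hsf' hx)
        (diffAt_of_contDiffOn isOpen_Ioo hsg' hx)).symm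

lemma Nice.neg {n : ℕ} {f : ℝ → ℝ} (hf : Nice n f) : Nice n (fun x => -f x) := by
  induction n generalizing f with
  | zero =>
    obtain ⟨⟨δf, hδf, hsf⟩, hlf⟩ := hf
    refine ⟨⟨δf, hδf, hsf.neg⟩, fun j hj => ?_⟩
    interval_cases j
    obtain ⟨Lf, hLf⟩ := hlf 0 le_rfl
    simp only [iteratedDeriv_zero] at *
    exact ⟨-Lf, hLf.neg⟩
  | succ n ih =>
    obtain ⟨δf, hδf, hsf⟩ := hf.1
    refine Nice.of_deriv ⟨δf, hδf, hsf.neg⟩ ?_ ?_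
    · obtain ⟨Lf, hLf⟩ := hf.2 0 (Nat.zero_le _)
      simp only [iteratedDeriv_zero] at hLf
      exact ⟨-Lf, hLf.neg⟩
    · refine (ih hf.derivStep).congr hδf (fun x hx => ?_)
      exact (deriv.neg).symm

lemma Nice.inv {n : ℕ} {f : ℝ → ℝ} {L : ℝ} (hf : Nice n f)
    (hL : Tendsto f (𝓝[>] (0:ℝ)) (𝓝 L)) (hL0 : L ≠ 0) :
    Nice n (fun x => (f x)⁻¹) := by
  induction n generalizing f with
  | zero =>
    obtain ⟨⟨δf, hδf, hsf⟩, hlf⟩ := hf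
    obtain ⟨ε, hε, hne⟩ := exists_Ioo_of_eventually (hL.eventually_ne hL0)
    refine ⟨⟨min δf ε, lt_min hδf hε, ?_⟩, fun j hj => ?_⟩
    · exact (hsf.mono (Ioo_subset_Ioo le_rfl (min_le_left _ _))).inv
        (fun x hx => hne x ⟨hx.1, lt_of_lt_of_le hx.2 (min_le_right _ _)⟩)
    · interval_cases j
      simp only [iteratedDeriv_zero]
      exact ⟨L⁻¹, hL.inv₀ hL0⟩
  | succ n ih =>
    obtain ⟨δf, hδf, hsf⟩ := hf.1
    obtain ⟨ε, hε, hne⟩ := exists_Ioo_of_eventually (hL.eventually_ne hL0)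
    set δ := min δf ε with hδdef
    have hδ : 0 < δ := lt_min hδf hε
    have hsf' := hsf.mono (Ioo_subset_Ioo (le_refl (0:ℝ)) (min_le_left δf ε))
    have hne' : ∀ x ∈ Ioo (0:ℝ) δ, f x ≠ 0 :=
      fun x hx => hne x ⟨hx.1, lt_of_lt_of_le hx.2 (min_le_right _ _)⟩
    refine Nice.of_deriv ⟨δ, hδ, hsf'.inv hne'⟩ ⟨L⁻¹, hL.inv₀ hL0⟩ ?_
    have hinv : Nice n (fun x => (f x)⁻¹) := ih (hf.mono n.le_succ) hL
    have h1 : Nice n (fun x => -deriv f x * ((f x)⁻¹ * (f x)⁻¹)) :=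
      (hf.derivStep.neg).mul (hinv.mul hinv)
    refine h1.congr hδ (fun x hx => ?_)
    rw [show (fun x => (f x)⁻¹) = f⁻¹ from rfl, deriv_inv'' (diffAt_of_contDiffOn isOpen_Ioo hsf' hx) (hne' x hx), pow_two]
    field_simp

lemma Nice.comp {n : ℕ} {u v : ℝ → ℝ} (hu : Nice n u) (hv : Nice n v)
    (hv0 : Tendsto v (𝓝[>] (0:ℝ)) (𝓝[>] (0:ℝ))) :
    Nice n (fun x => u (v x)) := by
  induction n generalizing u v with
  | zero =>
    obtain ⟨⟨δu, hδu, hsu⟩, hlu⟩ := hu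
    obtain ⟨⟨δv, hδv, hsv⟩, hlv⟩ := hv
    obtain ⟨ε, hε, hmaps⟩ := exists_Ioo_of_eventually (hv0.eventually (Ioo_mem_pos hδu))
    refine ⟨⟨min δv ε, lt_min hδv hε, ?_⟩, fun j hj => ?_⟩
    · have := ContDiffOn.comp hsu (hsv.mono (Ioo_subset_Ioo le_rfl (min_le_left _ _)))
        (fun x hx => hmaps x ⟨hx.1, lt_of_lt_of_le hx.2 (min_le_right _ _)⟩)
      exact this
    · interval_cases j
      obtain ⟨Lu, hLu⟩ := hlu 0 le_rfl
      simp only [iteratedDeriv_zero] at *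
      exact ⟨Lu, hLu.comp hv0⟩
  | succ n ih =>
    obtain ⟨δu, hδu, hsu⟩ := hu.1
    obtain ⟨δv, hδv, hsv⟩ := hv.1
    obtain ⟨ε, hε, hmaps⟩ := exists_Ioo_of_eventually (hv0.eventually (Ioo_mem_pos hδu))
    set δ := min δv ε with hδdef
    have hδ : 0 < δ := lt_min hδv hε
    have hsv' := hsv.mono (Ioo_subset_Ioo (le_refl (0:ℝ)) (min_le_left δv ε))
    have hmaps' : ∀ x ∈ Ioo (0:ℝ) δ, v x ∈ Ioo (0:ℝ) δu :=
      fun x hx => hmaps x ⟨hx.1, lt_of_lt_of_le hx.2 (min_le_right _ _)⟩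
    have hsm : ContDiffOn ℝ ∞ (fun x => u (v x)) (Ioo 0 δ) := by
      have := ContDiffOn.comp hsu hsv' (fun x hx => hmaps' x hx)
      exact this
    refine Nice.of_deriv ⟨δ, hδ, hsm⟩ ?_ ?_
    · obtain ⟨Lu, hLu⟩ := hu.2 0 (Nat.zero_le _)
      simp only [iteratedDeriv_zero] at hLu
      exact ⟨Lu, hLu.comp hv0⟩
    · have h1 : Nice n (fun x => deriv u (v x)) := ih hu.derivStep (hv.mono n.le_succ) hv0
      have h2 : Nice n (fun x => deriv u (v x) * deriv v x) := h1.mul hv.derivStep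
      refine h2.congr hδ (fun x hx => ?_)
      have hdu : DifferentiableAt ℝ u (v x) :=
        diffAt_of_contDiffOn isOpen_Ioo hsu (hmaps' x hx)
      have hdv : DifferentiableAt ℝ v x := diffAt_of_contDiffOn isOpen_Ioo hsv' hx
      exact (deriv_comp x hdu hdv).symm

/-- If the `(j+1)`-st derivative has a finite limit at `0+`, so does the `j`-th. -/
lemma lim_of_deriv_lim {f : ℝ → ℝ} (hf : ∃ δ > (0:ℝ), ContDiffOn ℝ ∞ f (Ioo 0 δ))
    {j : ℕ} {L : ℝ} (h : Tendsto (iteratedDeriv (j+1) f) (𝓝[>] (0:ℝ)) (𝓝 L)) :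
    ∃ M : ℝ, Tendsto (iteratedDeriv j f) (𝓝[>] (0:ℝ)) (𝓝 M) := by
  obtain ⟨δ, hδ, hsm⟩ := hf
  set C : ℝ := |L| + 1 with hC
  have hC0 : 0 ≤ C := by positivity
  have hev : ∀ᶠ x in 𝓝[>] (0:ℝ), |iteratedDeriv (j+1) f x| ≤ C := by
    filter_upwards [h.eventually (eventually_abs_sub_lt L one_pos)] with x hx
    calc |iteratedDeriv (j+1) f x| ≤ |iteratedDeriv (j+1) f x - L| + |L| := by
          simpa using abs_add_le (iteratedDeriv (j+1) f x - L) L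
      _ ≤ C := by rw [hC]; linarith
  obtain ⟨ε₀, hε₀, hbd⟩ := exists_Ioo_of_eventually hev
  set ε := min δ ε₀ with hεdef
  have hε : 0 < ε := lt_min hδ hε₀
  have hsub : Ioo (0:ℝ) ε ⊆ Ioo 0 δ := Ioo_subset_Ioo le_rfl (min_le_left _ _)
  have hlip : ∀ x ∈ Ioo (0:ℝ) ε, ∀ y ∈ Ioo (0:ℝ) ε,
      |iteratedDeriv j f y - iteratedDeriv j f x| ≤ C * |y - x| := by
    intro x hx y hy
    have := Convex.norm_image_sub_le_of_norm_hasDerivWithin_le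
      (f := iteratedDeriv j f) (f' := iteratedDeriv (j+1) f) (s := Ioo (0:ℝ) ε)
      (fun z hz => (hasDerivAt_iteratedDeriv isOpen_Ioo hsm j (hsub hz)).hasDerivWithinAt)
      (fun z hz => hbd z ⟨hz.1, lt_of_lt_of_le hz.2 (min_le_right _ _)⟩)
      (convex_Ioo _ _) hx hy
    simpa [Real.norm_eq_abs] using this
  have hcauchy : Cauchy (map (iteratedDeriv j f) (𝓝[>] (0:ℝ))) := by
    rw [Metric.cauchy_iff]
    refine ⟨map_neBot, fun r hr => ?_⟩
    set ε' := min ε (r / (C + 1)) with hε'def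
    have hε' : 0 < ε' := lt_min hε (by positivity)
    refine ⟨iteratedDeriv j f '' Ioo 0 ε', image_mem_map (Ioo_mem_pos hε'), ?_⟩
    rintro a ⟨x, hx, rfl⟩ b ⟨y, hy, rfl⟩
    have hx' : x ∈ Ioo (0:ℝ) ε := ⟨hx.1, lt_of_lt_of_le hx.2 (min_le_left _ _)⟩
    have hy' : y ∈ Ioo (0:ℝ) ε := ⟨hy.1, lt_of_lt_of_le hy.2 (min_le_left _ _)⟩
    have h1 : |x - y| < ε' := by
      rw [abs_sub_lt_iff]; constructor <;> nlinarith [hx.1, hx.2, hy.1, hy.2]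
    have h2 : dist (iteratedDeriv j f x) (iteratedDeriv j f y) ≤ C * |x - y| := by
      rw [Real.dist_eq]
      have := hlip y hy' x hx'
      simpa [abs_sub_comm] using this
    have h3 : C * |x - y| < r := by
      have hle : ε' * (C + 1) ≤ r := (le_div_iff₀ (by positivity)).1 (min_le_right _ _)
      nlinarith [mul_nonneg hC0 (sub_nonneg.2 h1.le), hε']
    linarith
  obtain ⟨M, hM⟩ := CompleteSpace.complete hcauchy
  exact ⟨M, hM⟩

/-- Build `Nice k f` from smoothness, a limit of `f`, and a limit of the `k`-th derivative. -/
lemma nice_of_kth_lim {f : ℝ → ℝ} (hsm : ∃ δ > (0:ℝ), ContDiffOn ℝ ∞ f (Ioo 0 δ))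
    (h0 : ∃ L : ℝ, Tendsto f (𝓝[>] (0:ℝ)) (𝓝 L)) {k : ℕ}
    (hk : ∃ L : ℝ, Tendsto (iteratedDeriv k f) (𝓝[>] (0:ℝ)) (𝓝 L)) : Nice k f := by
  have H : ∀ i : ℕ, ∃ M : ℝ, Tendsto (iteratedDeriv (k - i) f) (𝓝[>] (0:ℝ)) (𝓝 M) := by
    intro i
    induction i with
    | zero => simpa using hk
    | succ i ih =>
      rcases Nat.eq_zero_or_pos (k - i) with h | h
      · have : k - (i+1) = 0 := by omega
        rw [this]
        obtain ⟨L, hL⟩ := h0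
        exact ⟨L, by simpa [iteratedDeriv_zero] using hL⟩
      · obtain ⟨m, hm⟩ := Nat.exists_eq_add_of_lt h
        have hki : k - i = (k - (i+1)) + 1 := by omega
        rw [hki] at ih
        obtain ⟨M, hM⟩ := ih
        exact lim_of_deriv_lim hsm hM
  refine ⟨hsm, fun j hj => ?_⟩
  have := H (k - j)
  rwa [Nat.sub_sub_self hj] at this

/-- Key transfer lemma: if `g` is a local inverse-type function whose derivative is the
reciprocal of `deriv f` composed with `g`, then `Nice` transfers from `f` to `g`. -/
lemma nice_transfer : ∀ (k : ℕ) (f g : ℝ → ℝ) (L : ℝ),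
    Nice k f →
    (∃ δ > (0:ℝ), ContDiffOn ℝ ∞ g (Ioo 0 δ)) →
    Tendsto g (𝓝[>] (0:ℝ)) (𝓝[>] (0:ℝ)) →
    Tendsto (deriv f) (𝓝[>] (0:ℝ)) (𝓝 L) → L ≠ 0 →
    (∃ δ > (0:ℝ), ∀ x ∈ Ioo (0:ℝ) δ, deriv g x = (deriv f (g x))⁻¹) →
    Nice k g := by
  intro k
  induction k with
  | zero =>
    intro f g L _ hgs hg0 _ _ _
    refine ⟨hgs, fun j hj => ?_⟩
    interval_cases j
    refine ⟨0, ?_⟩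
    simpa [iteratedDeriv_zero] using hg0.mono_right nhdsWithin_le_nhds
  | succ k ih =>
    intro f g L hf hgs hg0 hL hL0 hder
    have hg' : Nice k g := ih f g L (hf.mono k.le_succ) hgs hg0 hL hL0 hder
    obtain ⟨δ, hδ, hder'⟩ := hder
    refine Nice.of_deriv hgs ⟨0, hg0.mono_right nhdsWithin_le_nhds⟩ ?_
    have hcomp : Nice k (fun x => deriv f (g x)) := (hf.derivStep).comp hg' hg0
    have hclim : Tendsto (fun x => deriv f (g x)) (𝓝[>] (0:ℝ)) (𝓝 L) := hL.comp hg0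
    have hinv : Nice k (fun x => (deriv f (g x))⁻¹) := hcomp.inv hclim hL0
    exact hinv.congr hδ (fun x hx => (hder' x hx).symm)

/-- for the Laplace exponent ψ (smooth on (0,∞), strictly convex,
ψ(0)=0, 0 < ψ'(0+) < ∞) with inverse Φ, for each k ≥ 1 the k-th derivative of Φ
has a finite limit at 0+ if and only if the k-th derivative of ψ does. -/
theorem inverse_derivatives_finite_iff (ψ Φ : ℝ → ℝ)
    (hsmooth : ContDiffOn ℝ (⊤ : ℕ∞) ψ (Ioi 0))
    (hconv : StrictConvexOn ℝ (Ici 0) ψ)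
    (hψ0 : ψ 0 = 0)
    (d : ℝ) (hd : 0 < d)
    (hd' : Tendsto (deriv ψ) (𝓝[>] (0 : ℝ)) (𝓝 d))
    (hΦ0 : Φ 0 = 0)
    (hΦψ : ∀ q ≥ (0 : ℝ), 0 ≤ Φ q ∧ ψ (Φ q) = q)
    (hψΦ : ∀ θ ≥ (0 : ℝ), Φ (ψ θ) = θ) :
    ∀ k : ℕ, 1 ≤ k →
      ((∃ L : ℝ, Tendsto (iteratedDeriv k Φ) (𝓝[>] (0 : ℝ)) (𝓝 L)) ↔
        (∃ L : ℝ, Tendsto (iteratedDeriv k ψ) (𝓝[>] (0 : ℝ)) (𝓝 L))) := by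
  have hsm : ContDiffOn ℝ ∞ ψ (Ioi 0) := hsmooth.of_le (by simp)
  have hdiffψ : ∀ x ∈ Ioi (0:ℝ), DifferentiableAt ℝ ψ x :=
    fun x hx => diffAt_of_contDiffOn isOpen_Ioi hsm hx
  have hconv' : StrictConvexOn ℝ (Ioi 0) ψ :=
    hconv.subset (Ioi_subset_Ici le_rfl) (convex_Ioi 0)
  have hmono' : StrictMonoOn (deriv ψ) (Ioi 0) := hconv'.strictMonoOn_deriv hdiffψ
  have hd_le : ∀ x ∈ Ioi (0:ℝ), d ≤ deriv ψ x := by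
    intro x hx
    refine le_of_tendsto hd' ?_
    filter_upwards [Ioo_mem_pos hx] with y hy
    exact (hmono' hy.1 hx hy.2).le
  have hdpos : ∀ x ∈ Ioi (0:ℝ), 0 < deriv ψ x := fun x hx => lt_of_lt_of_le hd (hd_le x hx)
  have hψmono : StrictMonoOn ψ (Ioi 0) := by
    refine strictMonoOn_of_deriv_pos (convex_Ioi 0) hsm.continuousOn (fun x hx => ?_)
    rw [interior_Ioi] at hx
    exact hdpos x hx
  have hψpos : ∀ x ∈ Ioi (0:ℝ), 0 < ψ x := by
    intro a ha
    by_contra hle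
    push_neg at hle
    obtain ⟨m, hm_pos, hm⟩ : ∃ m : ℝ, 0 < m ∧ ψ m = 0 := by
      rcases eq_or_lt_of_le hle with heq | hlt
      · exact ⟨a, ha, heq⟩
      · set b := a + (1 - ψ a) / d with hb
        have hba : b - a = (1 - ψ a) / d := by rw [hb]; ring
        have hba0 : 0 < b - a := by rw [hba]; exact div_pos (by linarith) hd
        have hab : a < b := by linarith
        have hIcc : Icc a b ⊆ Ioi (0:ℝ) := fun x hx => lt_of_lt_of_le ha hx.1
        have hcont : ContinuousOn ψ (Icc a b) := hsm.continuousOn.mono hIcc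
        have hder2 : ∀ x ∈ Ioo a b, HasDerivAt ψ (deriv ψ x) x :=
          fun x hx => (hdiffψ x (hIcc ⟨hx.1.le, hx.2.le⟩)).hasDerivAt
        obtain ⟨c, hc, hceq⟩ := exists_hasDerivAt_eq_slope ψ (deriv ψ) hab hcont hder2
        have h1 : d ≤ (ψ b - ψ a) / (b - a) := by
          rw [← hceq]; exact hd_le c (hIcc ⟨hc.1.le, hc.2.le⟩)
        have h2 : d * (b - a) ≤ ψ b - ψ a := (le_div_iff₀ hba0).1 h1
        have h3 : d * (b - a) = 1 - ψ a := by rw [hba]; field_simp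
        have hψb : 1 ≤ ψ b := by linarith
        have h0mem : (0:ℝ) ∈ Icc (ψ a) (ψ b) := ⟨hlt.le, by linarith⟩
        obtain ⟨m, hmIcc, hmeq⟩ := intermediate_value_Icc hab.le hcont h0mem
        exact ⟨m, lt_of_lt_of_le ha hmIcc.1, hmeq⟩
    have h := hψΦ m hm_pos.le
    rw [hm, hΦ0] at h
    exact hm_pos.ne h
  have hψ1 : 0 < ψ 1 := hψpos 1 (mem_Ioi.2 one_pos)
  have hψub : ∀ x ∈ Ioo (0:ℝ) 1, ψ x ≤ x * ψ 1 := by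
    intro x hx
    have h := hconv.convexOn.2 self_mem_Ici (mem_Ici.2 zero_le_one)
      (by linarith [hx.2] : (0:ℝ) ≤ 1 - x) hx.1.le (by ring)
    simpa [hψ0, smul_eq_mul] using h
  have hψ0lim : Tendsto ψ (𝓝[>] (0:ℝ)) (𝓝 0) := by
    have hupper : Tendsto (fun x : ℝ => x * ψ 1) (𝓝[>] (0:ℝ)) (𝓝 0) := by
      have h := ((continuous_id.mul (continuous_const (y := ψ 1))).tendsto (0:ℝ)).mono_left
        (nhdsWithin_le_nhds (s := Ioi (0:ℝ)))
      simpa [Pi.mul_def] using h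
    refine tendsto_of_tendsto_of_tendsto_of_le_of_le' tendsto_const_nhds hupper ?_ ?_
    · filter_upwards [eventually_mem_nhdsWithin] with x hx
      exact (hψpos x hx).le
    · filter_upwards [Ioo_mem_pos one_pos] with x hx
      exact hψub x hx
  have hψmem : Tendsto ψ (𝓝[>] (0:ℝ)) (𝓝[>] (0:ℝ)) :=
    tendsto_nhdsWithin_iff.2 ⟨hψ0lim,
      eventually_mem_nhdsWithin.mono (fun x hx => hψpos x hx)⟩
  have hΦpos : ∀ q ∈ Ioi (0:ℝ), 0 < Φ q := by
    intro q hq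
    rcases eq_or_lt_of_le (hΦψ q hq.le).1 with h | h
    · have h2 := (hΦψ q hq.le).2
      rw [← h, hψ0] at h2
      exact absurd h2 hq.ne
    · exact h
  have hΦlt : ∀ q1 q2 : ℝ, 0 ≤ q1 → q1 < q2 → Φ q1 < Φ q2 := by
    intro q1 q2 h1 h12
    have hq2 : 0 < q2 := lt_of_le_of_lt h1 h12
    rcases eq_or_lt_of_le h1 with rfl | h1'
    · rw [hΦ0]; exact hΦpos q2 hq2
    · by_contra hc
      push_neg at hc
      have hm := (hψmono.le_iff_le (hΦpos q2 hq2) (hΦpos q1 h1')).2 hc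
      rw [(hΦψ q2 hq2.le).2, (hΦψ q1 h1'.le).2] at hm
      linarith
  have hΦ0lim : Tendsto Φ (𝓝[>] (0:ℝ)) (𝓝 0) := by
    rw [tendsto_order]
    constructor
    · intro c hc
      filter_upwards [eventually_mem_nhdsWithin] with q hq
      exact lt_trans hc (hΦpos q hq)
    · intro c hc
      have hψc : 0 < ψ c := hψpos c hc
      filter_upwards [Ioo_mem_pos hψc] with q hq
      have h := hΦlt q (ψ c) hq.1.le hq.2
      rwa [hψΦ c hc.le] at h
  have hΦmem : Tendsto Φ (𝓝[>] (0:ℝ)) (𝓝[>] (0:ℝ)) :=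
    tendsto_nhdsWithin_iff.2 ⟨hΦ0lim,
      eventually_mem_nhdsWithin.mono (fun q hq => hΦpos q hq)⟩
  have hΦcont : ∀ a ∈ Ioi (0:ℝ), ContinuousAt Φ a := by
    intro a ha
    have hθ0 : 0 < Φ a := hΦpos a ha
    have hψθ0 : ψ (Φ a) = a := (hΦψ a ha.le).2
    rw [ContinuousAt, tendsto_order]
    constructor
    · intro c hc
      set m := max ((c + Φ a)/2) (Φ a / 2) with hmdef
      have hm0 : 0 < m := lt_of_lt_of_le (by linarith) (le_max_right _ _)
      have hmθ : m < Φ a := max_lt (by linarith) (by linarith)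
      have hcm : c < m := by
        rcases le_or_gt c 0 with h | h
        · exact lt_of_le_of_lt h hm0
        · exact lt_of_lt_of_le (by linarith) (le_max_left _ _)
      have hψm : ψ m < a := by
        have h := hψmono hm0 hθ0 hmθ
        rwa [hψθ0] at h
      filter_upwards [Ioi_mem_nhds hψm] with q hq
      have h := hΦlt (ψ m) q (hψpos m hm0).le hq
      rw [hψΦ m hm0.le] at h
      exact lt_trans hcm h
    · intro c hc
      set m := (Φ a + c)/2 with hmdef
      have h1 : Φ a < m := by rw [hmdef]; linarith
      have h2 : m < c := by rw [hmdef]; linarith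
      have hm0 : 0 < m := lt_trans hθ0 h1
      have hψm : a < ψ m := by
        have h := hψmono hθ0 hm0 h1
        rwa [hψθ0] at h
      filter_upwards [Iio_mem_nhds hψm, Ioi_mem_nhds ha] with q hq hq'
      have h := hΦlt q (ψ m) hq'.le hq
      rw [hψΦ m hm0.le] at h
      exact lt_trans h h2
  have hΦder : ∀ q ∈ Ioi (0:ℝ), HasDerivAt Φ ((deriv ψ (Φ q))⁻¹) q := by
    intro q hq
    have hθ : Φ q ∈ Ioi (0:ℝ) := hΦpos q hq
    refine HasDerivAt.of_local_left_inverse (hΦcont q hq) ((hdiffψ _ hθ).hasDerivAt)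
      (ne_of_gt (hdpos _ hθ)) ?_
    filter_upwards [Ioi_mem_nhds hq] with y hy
    exact (hΦψ y hy.le).2
  have hΦderiv : ∀ q ∈ Ioi (0:ℝ), deriv Φ q = (deriv ψ (Φ q))⁻¹ :=
    fun q hq => (hΦder q hq).deriv
  have hΦsm : ContDiffOn ℝ ∞ Φ (Ioi 0) := by
    rw [contDiffOn_infty]
    intro n
    induction n with
    | zero =>
      rw [show ((0:ℕ) : WithTop ℕ∞) = 0 from rfl, contDiffOn_zero]
      exact fun q hq => (hΦcont q hq).continuousWithinAt
    | succ n ihn =>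
      have hcast : ((n+1 : ℕ) : WithTop ℕ∞) = (n : WithTop ℕ∞) + 1 := by norm_cast
      rw [hcast]
      refine (contDiffOn_succ_iff_deriv_of_isOpen isOpen_Ioi).2 ⟨?_, ?_, ?_⟩
      · exact fun q hq => (hΦder q hq).differentiableAt.differentiableWithinAt
      · intro h
        exact absurd h (by exact_mod_cast (WithTop.natCast_ne_top n))
      · have h1 : ContDiffOn ℝ n (deriv ψ) (Ioi 0) :=
          hsm.deriv_of_isOpen isOpen_Ioi (by exact_mod_cast le_top)
        have h2 : ContDiffOn ℝ n (deriv ψ ∘ Φ) (Ioi 0) :=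
          h1.comp ihn (fun q hq => hΦpos q hq)
        have h3 := h2.inv (fun q hq => ne_of_gt (hdpos _ (hΦpos q hq)))
        exact h3.congr (fun q hq => hΦderiv q hq)
  have hψ'Φlim : Tendsto (fun q => deriv ψ (Φ q)) (𝓝[>] (0:ℝ)) (𝓝 d) := hd'.comp hΦmem
  have hΦ'lim : Tendsto (deriv Φ) (𝓝[>] (0:ℝ)) (𝓝 d⁻¹) := by
    refine Tendsto.congr' ?_ (hψ'Φlim.inv₀ hd.ne')
    exact eventuallyEq_of_mem self_mem_nhdsWithin (fun q hq => (hΦderiv q hq).symm)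
  have hψ'formula : ∀ θ ∈ Ioi (0:ℝ), deriv ψ θ = (deriv Φ (ψ θ))⁻¹ := by
    intro θ hθ
    have h1 : deriv Φ (ψ θ) = (deriv ψ (Φ (ψ θ)))⁻¹ := hΦderiv _ (hψpos θ hθ)
    rw [hψΦ θ hθ.le] at h1
    rw [h1, inv_inv]
  intro k _
  constructor
  · rintro ⟨L, hL⟩
    have hNΦ : Nice k Φ := nice_of_kth_lim
      ⟨1, one_pos, hΦsm.mono (fun x hx => hx.1)⟩ ⟨0, hΦ0lim⟩ ⟨L, hL⟩
    have hNψ : Nice k ψ := nice_transfer k Φ ψ d⁻¹ hNΦ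
      ⟨1, one_pos, hsm.mono (fun x hx => hx.1)⟩ hψmem hΦ'lim (inv_ne_zero hd.ne')
      ⟨1, one_pos, fun θ hθ => hψ'formula θ hθ.1⟩
    exact hNψ.2 k le_rfl
  · rintro ⟨L, hL⟩
    have hNψ : Nice k ψ := nice_of_kth_lim
      ⟨1, one_pos, hsm.mono (fun x hx => hx.1)⟩ ⟨0, hψ0lim⟩ ⟨L, hL⟩
    have hNΦ : Nice k Φ := nice_transfer k ψ Φ d hNψ
      ⟨1, one_pos, hΦsm.mono (fun x hx => hx.1)⟩ hΦmem hd' hd.ne'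
      ⟨1, one_pos, fun q hq => hΦderiv q hq.1⟩
    exact hNΦ.2 k le_rfl
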